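/- Let (X_n)_{n≥1} be an infinite sequence of random variables with values in a Polish space X, with law P and predictive rule (P_n)_{n≥0}. Then (X_n)_{n≥1} is exchangeable if and only if, for every n≥0, the following two conditions hold: (i) for every measurable set A, P_n(A | x_{1:n}) is a symmetric function of (x_1,…,x_n); (ii) the set function (A,B) ↦ ∫_A P_{n+1}(B | x_{1:n}, x_{n+1}) dP_n(x_{n+1} | x_{1:n}) is symmetric in A and B (here P_0(·|x_{1:0}) means P_0(·)). -/

import Mathlib

open MeasureTheory ProbabilityTheory Filter Topology
open scoped ENNReal NNReal

/-- A sequence of random variables is exchangeable if its joint law is invariant under every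
finite permutation of the indices. -/
def Exchangeable {Ω 𝕏 : Type*} [MeasurableSpace Ω] [MeasurableSpace 𝕏]
    (μ : Measure Ω) (X : ℕ → Ω → 𝕏) : Prop :=
  ∀ σ : Equiv.Perm ℕ, {n | σ n ≠ n}.Finite →
    Measure.map (fun ω => fun n => X (σ n) ω) μ = Measure.map (fun ω => fun n => X n ω) μ

/-- `(P n)_{n≥0}` is (a version of) the predictive rule of the sequence `X` under `μ`:
`P n` is a regular conditional distribution of `X_{n+1}` given `(X_1,…,X_n)` (and `P 0` is the
law of `X_1`, the history space `Fin 0 → 𝕏` being a singleton). -/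
def IsPredictiveRule {Ω 𝕏 : Type*} [MeasurableSpace Ω] [MeasurableSpace 𝕏]
    (μ : Measure Ω) (X : ℕ → Ω → 𝕏)
    (P : (n : ℕ) → Kernel (Fin n → 𝕏) 𝕏) : Prop :=
  ∀ (n : ℕ) (A : Set 𝕏) (B : Set (Fin n → 𝕏)), MeasurableSet A → MeasurableSet B →
    μ {ω | (fun i : Fin n => X i ω) ∈ B ∧ X n ω ∈ A}
      = ∫⁻ x in B, P n x A ∂(Measure.map (fun ω (i : Fin n) => X i ω) μ)

/-!
For `⇐`, the predictive rule determines the finite-dimensional laws recursively: the law of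
`X_{1:n+1}` is the image of `law(X_{1:n}) ⊗ P_n` under `Fin.snoc`. The symmetric group is generated
by adjacent transpositions; those fixing the last coordinate preserve this law by (i) and
induction, and the transposition of the last two coordinates preserves it by (ii).

For `⇒`, disintegrate the law of `(X_{1:n}, (X_{n+1}, X_{n+2}))` and average the kernel over the
permutations of the past and over the swap of the two future coordinates. By exchangeability the
average is still a disintegration, and it is symmetric at every point. Its first marginal is a
symmetric predictive kernel, and (ii) holds at `x` as soon as the next kernel at `Fin.snoc x y`
agrees with the conditional kernel of this pair law at `(x, y)` for almost every `y`. That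
agreement only holds almost everywhere, so on an exceptional null set the kernels are replaced
by a fixed Dirac mass. The exceptional set is closed under permutations and under appending a
coordinate, and is charged with probability zero from outside it: then (ii) holds exactly off the
set, and on it the two-step law is a product of Dirac masses.
-/

open Set

lemma countable_generatePiSystem {α : Type*} {S : Set (Set α)} (hS : S.Countable) :
    (generatePiSystem S).Countable := by
  refine ((countable_ofPred_finite_subset hS).image sInter).mono fun u hu => ?_
  induction hu with
  | @base s hs => exact ⟨{s}, ⟨finite_singleton s, singleton_subset_iff.2 hs⟩, sInter_singleton s⟩
  | inter _ _ _ ihs iht =>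
    obtain ⟨ts, ⟨hts, htsS⟩, rfl⟩ := ihs
    obtain ⟨tt, ⟨htt, httS⟩, rfl⟩ := iht
    exact ⟨ts ∪ tt, ⟨hts.union htt, union_subset htsS httS⟩, sInter_union ts tt⟩

lemma ProbabilityTheory.Kernel.measurableSet_setOf_eq {α β : Type*} [MeasurableSpace α]
    [MeasurableSpace β] [MeasurableSpace.CountablyGenerated β]
    (κ η : Kernel α β) [IsFiniteKernel κ] [IsFiniteKernel η] :
    MeasurableSet {a | κ a = η a} := by
  set C := generatePiSystem (MeasurableSpace.countableGeneratingSet β)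
  have hC : (insert univ C).Countable :=
    (countable_generatePiSystem MeasurableSpace.countable_countableGeneratingSet).insert _
  have hCmeas : ∀ s ∈ insert univ C, MeasurableSet s := by
    rintro s (rfl | hs)
    · exact .univ
    · exact generatePiSystem_measurableSet
        (fun t ht => MeasurableSpace.measurableSet_countableGeneratingSet ht) s hs
  have hgen : ‹MeasurableSpace β› = MeasurableSpace.generateFrom C := by
    rw [generateFrom_generatePiSystem_eq, MeasurableSpace.generateFrom_countableGeneratingSet]
  have : {a | κ a = η a} = ⋂ s ∈ insert univ C, {a | κ a s = η a s} := by
    ext a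
    simp only [mem_ofPred_eq, mem_iInter]
    refine ⟨fun h s _ => h ▸ rfl, fun h => ext_of_generate_finite C hgen
      (isPiSystem_generatePiSystem _) (fun s hs => h s (mem_insert_of_mem _ hs))
      (h univ (mem_insert _ _))⟩
  rw [this]
  exact .biInter hC fun s hs =>
    measurableSet_eq_fun (κ.measurable_coe (hCmeas s hs)) (η.measurable_coe (hCmeas s hs))

lemma MeasureTheory.Measure.map_compProd_comap {α α' β : Type*} [MeasurableSpace α]
    [MeasurableSpace α'] [MeasurableSpace β] (ν : Measure α) [SFinite ν] (η : Kernel α β) [IsSFiniteKernel η]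
    {f : α → α'} {g : α' → α} (hf : Measurable f) (hg : Measurable g)
    (hgf : Function.LeftInverse g f) :
    ν.map f ⊗ₘ η.comap g hg = (ν ⊗ₘ η).map (Prod.map f id) := by
  ext s hs
  have hs' : MeasurableSet (Prod.map f id ⁻¹' s) := (hf.prodMap measurable_id) hs
  rw [Measure.compProd_apply hs, Measure.map_apply (hf.prodMap measurable_id) hs,
    Measure.compProd_apply hs', lintegral_map ((η.comap g hg).measurable_kernel_prodMk_left hs) hf]
  refine lintegral_congr fun x => ?_
  rw [Kernel.comap_apply, hgf x]
  rfl

namespace Predictive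

section Tuples

variable {𝕏 : Type*}

lemma snoc_comp_swap_castSucc {n : ℕ} (a b : Fin n) (x : Fin n → 𝕏) (y : 𝕏) :
    (Fin.snoc x y : Fin (n + 1) → 𝕏) ∘ Equiv.swap a.castSucc b.castSucc
      = Fin.snoc (x ∘ Equiv.swap a b) y := by
  funext i
  refine Fin.lastCases ?_ (fun j => ?_) i
  · rw [Function.comp_apply, Equiv.swap_apply_of_ne_of_ne (Fin.castSucc_lt_last a).ne'
      (Fin.castSucc_lt_last b).ne', Fin.snoc_last, Fin.snoc_last]
  · rw [Function.comp_apply, (Fin.castSucc_injective n).swap_apply, Fin.snoc_castSucc,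
      Fin.snoc_castSucc, Function.comp_apply]

lemma snoc_snoc_comp_swap {n : ℕ} (x : Fin n → 𝕏) (u y : 𝕏) :
    (Fin.snoc (Fin.snoc x u : Fin (n + 1) → 𝕏) y : Fin (n + 2) → 𝕏)
        ∘ Equiv.swap (Fin.last n).castSucc (Fin.last (n + 1))
      = Fin.snoc (Fin.snoc x y : Fin (n + 1) → 𝕏) u := by
  funext i
  refine Fin.lastCases ?_ (fun j => ?_) i
  · simp only [Function.comp_apply, Equiv.swap_apply_right, Fin.snoc_castSucc, Fin.snoc_last]
  · refine Fin.lastCases ?_ (fun k => ?_) j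
    · simp only [Function.comp_apply, Equiv.swap_apply_left, Fin.snoc_last, Fin.snoc_castSucc]
    · rw [Function.comp_apply, Equiv.swap_apply_of_ne_of_ne
        (fun h => (Fin.castSucc_lt_last k).ne (Fin.castSucc_injective _ h))
        (Fin.castSucc_lt_last _).ne]
      simp only [Fin.snoc_castSucc]

def snocProd {n : ℕ} (p : (Fin n → 𝕏) × 𝕏) : Fin (n + 1) → 𝕏 := Fin.snoc p.1 p.2

def initLast {n : ℕ} (z : Fin (n + 1) → 𝕏) : (Fin n → 𝕏) × 𝕏 := (Fin.init z, z (Fin.last n))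

def initSeg (n : ℕ) (f : ℕ → 𝕏) : Fin n → 𝕏 := fun i => f i

lemma initLast_snocProd {n : ℕ} (p : (Fin n → 𝕏) × 𝕏) : initLast (snocProd p) = p := by
  simp [initLast, snocProd]

lemma snocProd_initSeg (n : ℕ) (f : ℕ → 𝕏) : snocProd (initSeg n f, f n) = initSeg (n + 1) f := by
  funext i
  refine Fin.lastCases ?_ (fun j => ?_) i <;> simp [snocProd, initSeg]

lemma initSeg_comp_extendDomain {n : ℕ} (σ : Equiv.Perm (Fin n)) (f : ℕ → 𝕏) :
    initSeg n (f ∘ σ.extendDomain Fin.equivSubtype) = initSeg n f ∘ σ :=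
  funext fun i => congrArg f (Equiv.Perm.extendDomain_apply_image σ Fin.equivSubtype i)

def permClosure {n : ℕ} (S : Set (Fin n → 𝕏)) : Set (Fin n → 𝕏) :=
  ⋃ σ : Equiv.Perm (Fin n), (· ∘ σ) ⁻¹' S

lemma subset_permClosure {n : ℕ} (S : Set (Fin n → 𝕏)) : S ⊆ permClosure S :=
  fun _ hx => mem_iUnion.2 ⟨1, hx⟩

lemma preimage_comp_perm_permClosure {n : ℕ} (τ : Equiv.Perm (Fin n)) (S : Set (Fin n → 𝕏)) :
    (· ∘ τ) ⁻¹' permClosure S = permClosure S := by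
  ext
  simp only [permClosure, mem_preimage, mem_iUnion, Function.comp_assoc]
  refine ⟨fun ⟨σ, h⟩ => ⟨τ * σ, h⟩, fun ⟨σ, h⟩ => ⟨τ⁻¹ * σ, ?_⟩⟩
  simpa [← Function.comp_assoc] using h

end Tuples

variable {𝕏 : Type*} [MeasurableSpace 𝕏]

@[fun_prop]
lemma measurable_snocProd {n : ℕ} : Measurable (snocProd (𝕏 := 𝕏) (n := n)) := by
  refine measurable_pi_lambda _ fun i => ?_
  refine Fin.lastCases ?_ (fun j => ?_) i <;> simp only [snocProd, Fin.snoc_last,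
    Fin.snoc_castSucc] <;> fun_prop

lemma measurable_snoc {n : ℕ} (x : Fin n → 𝕏) :
    Measurable (fun y : 𝕏 => (Fin.snoc x y : Fin (n + 1) → 𝕏)) :=
  measurable_snocProd.comp (measurable_const.prodMk measurable_id)

lemma measurable_snoc_snoc {n : ℕ} (x : Fin n → 𝕏) :
    Measurable fun p : 𝕏 × 𝕏 => (Fin.snoc (Fin.snoc x p.1 : Fin (n + 1) → 𝕏) p.2 :
      Fin (n + 2) → 𝕏) :=
  measurable_snocProd.comp (((measurable_snoc x).comp measurable_fst).prodMk measurable_snd)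

@[fun_prop]
lemma measurable_init {n : ℕ} : Measurable (Fin.init : (Fin (n + 1) → 𝕏) → Fin n → 𝕏) := by
  unfold Fin.init; fun_prop

@[fun_prop]
lemma measurable_initLast {n : ℕ} : Measurable (initLast (𝕏 := 𝕏) (n := n)) := by
  unfold initLast; fun_prop

@[fun_prop]
lemma measurable_initSeg (n : ℕ) : Measurable (initSeg (𝕏 := 𝕏) n) := by
  unfold initSeg; fun_prop

lemma measurable_comp_perm {n : ℕ} (σ : Equiv.Perm (Fin n)) :
    Measurable (· ∘ σ : (Fin n → 𝕏) → Fin n → 𝕏) := by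
  fun_prop

def IsPermInvariant {n : ℕ} (μ : Measure (Fin n → 𝕏)) : Prop :=
  ∀ σ : Equiv.Perm (Fin n), μ.map (· ∘ σ) = μ

def invariancePerms {n : ℕ} (μ : Measure (Fin n → 𝕏)) : Submonoid (Equiv.Perm (Fin n)) where
  carrier := {σ | μ.map (· ∘ σ) = μ}
  one_mem' := Measure.map_id
  mul_mem' {σ τ} (hσ : μ.map (· ∘ σ) = μ) (hτ : μ.map (· ∘ τ) = μ) := by
    change μ.map ((· ∘ τ) ∘ (· ∘ σ)) = μ
    rw [← Measure.map_map (measurable_comp_perm τ) (measurable_comp_perm σ), hσ, hτ]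

lemma isPermInvariant_iff_invariancePerms_eq_top {n : ℕ} {μ : Measure (Fin n → 𝕏)} :
    IsPermInvariant μ ↔ invariancePerms μ = ⊤ :=
  (Submonoid.eq_top_iff' (invariancePerms μ)).symm

lemma measurableSet_permClosure {n : ℕ} {S : Set (Fin n → 𝕏)} (hS : MeasurableSet S) :
    MeasurableSet (permClosure S) :=
  .iUnion fun σ => measurable_comp_perm σ hS

lemma IsPermInvariant.measure_permClosure {n : ℕ} {μ : Measure (Fin n → 𝕏)}
    (hμ : IsPermInvariant μ) {S : Set (Fin n → 𝕏)} (hS : MeasurableSet S) (h0 : μ S = 0) :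
    μ (permClosure S) = 0 :=
  measure_iUnion_null fun σ => by rwa [← Measure.map_apply (measurable_comp_perm σ) hS, hμ σ]

lemma map_snocProd_apply {n : ℕ} (μ : Measure (Fin n → 𝕏)) [SFinite μ]
    (κ : Kernel (Fin n → 𝕏) 𝕏) [IsSFiniteKernel κ] {S : Set (Fin (n + 1) → 𝕏)}
    (hS : MeasurableSet S) :
    (μ ⊗ₘ κ).map snocProd S = ∫⁻ x, κ x {y | Fin.snoc x y ∈ S} ∂μ := by
  rw [Measure.map_apply measurable_snocProd hS, Measure.compProd_apply (measurable_snocProd hS)]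
  rfl

lemma map_comp_swap_castSucc {n : ℕ} {μ : Measure (Fin n → 𝕏)} [SFinite μ]
    {κ : Kernel (Fin n → 𝕏) 𝕏} [IsSFiniteKernel κ] {a b : Fin n}
    (hμ : μ.map (· ∘ Equiv.swap a b) = μ) (hκ : ∀ x, κ (x ∘ Equiv.swap a b) = κ x) :
    ((μ ⊗ₘ κ).map snocProd).map (· ∘ Equiv.swap a.castSucc b.castSucc)
      = (μ ⊗ₘ κ).map snocProd := by
  ext S hS
  have hslice : Measurable fun x => κ x {y | Fin.snoc x y ∈ S} :=
    κ.measurable_kernel_prodMk_left (measurable_snocProd hS)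
  rw [Measure.map_apply (measurable_comp_perm _) hS,
    map_snocProd_apply μ κ (measurable_comp_perm _ hS), map_snocProd_apply μ κ hS]
  simp_rw [mem_preimage, snoc_comp_swap_castSucc]
  calc ∫⁻ x, κ x {y | Fin.snoc (x ∘ Equiv.swap a b) y ∈ S} ∂μ
      = ∫⁻ x, κ (x ∘ Equiv.swap a b) {y | Fin.snoc (x ∘ Equiv.swap a b) y ∈ S} ∂μ := by
        simp_rw [hκ]
    _ = ∫⁻ x, κ x {y | Fin.snoc x y ∈ S} ∂(μ.map (· ∘ Equiv.swap a b)) :=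
        (lintegral_map hslice (measurable_comp_perm _)).symm
    _ = ∫⁻ x, κ x {y | Fin.snoc x y ∈ S} ∂μ := by rw [hμ]

section TwoStep

variable (P : (n : ℕ) → Kernel (Fin n → 𝕏) 𝕏)

noncomputable def twoStep (n : ℕ) (x : Fin n → 𝕏) : Measure (𝕏 × 𝕏) :=
  P n x ⊗ₘ (P (n + 1)).comap (fun y => Fin.snoc x y) (measurable_snoc x)

variable {P} [∀ n, IsMarkovKernel (P n)]

instance (n : ℕ) (x : Fin n → 𝕏) : IsProbabilityMeasure (twoStep P n x) := by
  unfold twoStep; infer_instance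

lemma twoStep_apply_prod {n : ℕ} (x : Fin n → 𝕏) {A B : Set 𝕏} (hA : MeasurableSet A)
    (hB : MeasurableSet B) :
    twoStep P n x (A ×ˢ B) = ∫⁻ y in A, P (n + 1) (Fin.snoc x y) B ∂(P n x) :=
  Measure.compProd_apply_prod hA hB

lemma map_swap_twoStep_eq_iff {n : ℕ} (x : Fin n → 𝕏) :
    (twoStep P n x).map Prod.swap = twoStep P n x ↔
      ∀ A B : Set 𝕏, MeasurableSet A → MeasurableSet B →
        ∫⁻ y in A, P (n + 1) (Fin.snoc x y) B ∂(P n x)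
          = ∫⁻ y in B, P (n + 1) (Fin.snoc x y) A ∂(P n x) := by
  constructor
  · intro h A B hA hB
    rw [← twoStep_apply_prod x hA hB, ← twoStep_apply_prod x hB hA, ← preimage_swap_prod,
      ← Measure.map_apply measurable_swap (hB.prod hA), h]
  · refine fun h => Measure.ext_prod fun {A B} hA hB => ?_
    rw [Measure.map_apply measurable_swap (hA.prod hB), preimage_swap_prod,
      twoStep_apply_prod x hA hB, twoStep_apply_prod x hB hA, h B A hB hA]

end TwoStep

section Invariance

variable {m : (n : ℕ) → Measure (Fin n → 𝕏)} [∀ n, SFinite (m n)]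
  {P : (n : ℕ) → Kernel (Fin n → 𝕏) 𝕏} [∀ n, IsMarkovKernel (P n)]

lemma apply_eq_lintegral_twoStep (hm : ∀ n, m (n + 1) = (m n ⊗ₘ P n).map snocProd) (n : ℕ)
    {S : Set (Fin (n + 2) → 𝕏)} (hS : MeasurableSet S) :
    m (n + 2) S = ∫⁻ x, twoStep P n x ((fun p : 𝕏 × 𝕏 =>
      (Fin.snoc (Fin.snoc x p.1 : Fin (n + 1) → 𝕏) p.2 : Fin (n + 2) → 𝕏)) ⁻¹' S) ∂(m n) := by
  have hg : Measurable fun z => P (n + 1) z {y | Fin.snoc z y ∈ S} :=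
    (P (n + 1)).measurable_kernel_prodMk_left (measurable_snocProd hS)
  have hg' : Measurable fun p => P (n + 1) (snocProd p) {y | Fin.snoc (snocProd p) y ∈ S} :=
    hg.comp measurable_snocProd
  rw [hm (n + 1), map_snocProd_apply _ _ hS, hm n, lintegral_map hg measurable_snocProd,
    Measure.lintegral_compProd hg']
  refine lintegral_congr fun x => ?_
  rw [twoStep, Measure.compProd_apply (measurable_snoc_snoc x hS)]
  rfl

lemma map_comp_swap_last_two (hm : ∀ n, m (n + 1) = (m n ⊗ₘ P n).map snocProd) {n : ℕ}
    (hP : ∀ x, (twoStep P n x).map Prod.swap = twoStep P n x) :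
    (m (n + 2)).map (· ∘ Equiv.swap (Fin.last n).castSucc (Fin.last (n + 1))) = m (n + 2) := by
  ext S hS
  rw [Measure.map_apply (measurable_comp_perm _) hS,
    apply_eq_lintegral_twoStep hm n (measurable_comp_perm _ hS), apply_eq_lintegral_twoStep hm n hS]
  refine lintegral_congr fun x => ?_
  conv_rhs => rw [← hP x, Measure.map_apply measurable_swap (measurable_snoc_snoc x hS)]
  rw [← preimage_comp, ← preimage_comp]
  congr 2
  funext p
  exact snoc_snoc_comp_swap x p.1 p.2

lemma IsPermInvariant.succ (hm : ∀ n, m (n + 1) = (m n ⊗ₘ P n).map snocProd)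
    (hi : ∀ n (σ : Equiv.Perm (Fin n)) x, P n (x ∘ σ) = P n x)
    (hii : ∀ n x, (twoStep P n x).map Prod.swap = twoStep P n x) {n : ℕ}
    (ih : IsPermInvariant (m n)) : IsPermInvariant (m (n + 1)) := by
  rw [isPermInvariant_iff_invariancePerms_eq_top, eq_top_iff,
    ← Equiv.Perm.mclosure_swap_castSucc_succ n, Submonoid.closure_le]
  rintro _ ⟨i, rfl⟩
  dsimp only
  cases n with
  | zero => exact i.elim0
  | succ k =>
    induction i using Fin.lastCases with
    | last => rw [Fin.succ_last]; exact map_comp_swap_last_two hm (hii k)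
    | cast j =>
      rw [SetLike.mem_coe, Fin.succ_castSucc]
      change (m (k + 2)).map _ = _
      rw [hm (k + 1)]
      exact map_comp_swap_castSucc (ih _) (fun x => hi _ _ x)

lemma isPermInvariant_of_symmetric (hm : ∀ n, m (n + 1) = (m n ⊗ₘ P n).map snocProd)
    (hi : ∀ n (σ : Equiv.Perm (Fin n)) x, P n (x ∘ σ) = P n x)
    (hii : ∀ n x, (twoStep P n x).map Prod.swap = twoStep P n x) (n : ℕ) :
    IsPermInvariant (m n) := by
  induction n with
  | zero => intro σ; rw [Subsingleton.elim σ 1]; exact Measure.map_id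
  | succ n ih => exact ih.succ hm hi hii

end Invariance

section Exceptional

def leakSet {n : ℕ} (η : Kernel (Fin n → 𝕏) 𝕏) (E : Set (Fin (n + 1) → 𝕏)) : Set (Fin n → 𝕏) :=
  {x | η x {y | Fin.snoc x y ∈ E} ≠ 0}

lemma measurableSet_leakSet {n : ℕ} (η : Kernel (Fin n → 𝕏) 𝕏) [IsSFiniteKernel η]
    {E : Set (Fin (n + 1) → 𝕏)} (hE : MeasurableSet E) : MeasurableSet (leakSet η E) :=
  η.measurable_kernel_prodMk_left (measurable_snocProd hE) (measurableSet_singleton 0).compl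

variable (κ : (n : ℕ) → Kernel (Fin n → 𝕏) 𝕏) (S : (n : ℕ) → Set (Fin n → 𝕏))

def exceptionalIter : ℕ → (n : ℕ) → Set (Fin n → 𝕏)
  | 0, n => permClosure (S n)
  | j + 1, 0 => exceptionalIter j 0 ∪ permClosure (leakSet (κ 0) (exceptionalIter j 1))
  | j + 1, n + 1 => exceptionalIter j (n + 1)
      ∪ permClosure (leakSet (κ (n + 1)) (exceptionalIter j (n + 2)))
      ∪ permClosure (Fin.init ⁻¹' exceptionalIter j n)

def exceptionalSet (n : ℕ) : Set (Fin n → 𝕏) := ⋃ j, exceptionalIter κ S j n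

variable {κ S}

lemma measurableSet_exceptionalIter [∀ n, IsSFiniteKernel (κ n)]
    (hS : ∀ n, MeasurableSet (S n)) : ∀ j n, MeasurableSet (exceptionalIter κ S j n)
  | 0, n => measurableSet_permClosure (hS n)
  | j + 1, 0 => (measurableSet_exceptionalIter hS j 0).union
      (measurableSet_permClosure (measurableSet_leakSet _ (measurableSet_exceptionalIter hS j 1)))
  | j + 1, n + 1 => ((measurableSet_exceptionalIter hS j (n + 1)).union
      (measurableSet_permClosure
        (measurableSet_leakSet _ (measurableSet_exceptionalIter hS j (n + 2))))).union
      (measurableSet_permClosure (measurable_init (measurableSet_exceptionalIter hS j n)))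

lemma preimage_comp_perm_exceptionalIter :
    ∀ j n (σ : Equiv.Perm (Fin n)), (· ∘ σ) ⁻¹' exceptionalIter κ S j n = exceptionalIter κ S j n
  | 0, n, σ => preimage_comp_perm_permClosure σ _
  | j + 1, 0, σ => by
    rw [exceptionalIter, preimage_union, preimage_comp_perm_exceptionalIter j 0 σ,
      preimage_comp_perm_permClosure]
  | j + 1, n + 1, σ => by
    rw [exceptionalIter, preimage_union, preimage_union,
      preimage_comp_perm_exceptionalIter j (n + 1) σ, preimage_comp_perm_permClosure,
      preimage_comp_perm_permClosure]

lemma leakSet_subset_exceptionalIter (j n : ℕ) :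
    leakSet (κ n) (exceptionalIter κ S j (n + 1)) ⊆ exceptionalIter κ S (j + 1) n := by
  cases n with
  | zero => exact (subset_permClosure _).trans subset_union_right
  | succ n => exact (subset_permClosure _).trans (subset_union_right.trans subset_union_left)

lemma measurableSet_exceptionalSet [∀ n, IsSFiniteKernel (κ n)] (hS : ∀ n, MeasurableSet (S n))
    (n : ℕ) : MeasurableSet (exceptionalSet κ S n) :=
  .iUnion fun j => measurableSet_exceptionalIter hS j n

lemma subset_exceptionalSet (n : ℕ) : S n ⊆ exceptionalSet κ S n :=
  fun _ hx => mem_iUnion.2 ⟨0, subset_permClosure _ hx⟩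

lemma preimage_comp_perm_exceptionalSet {n : ℕ} (σ : Equiv.Perm (Fin n)) :
    (· ∘ σ) ⁻¹' exceptionalSet κ S n = exceptionalSet κ S n := by
  simp_rw [exceptionalSet, preimage_iUnion, preimage_comp_perm_exceptionalIter]

lemma snoc_mem_exceptionalSet {n : ℕ} {x : Fin n → 𝕏} (hx : x ∈ exceptionalSet κ S n) (y : 𝕏) :
    Fin.snoc x y ∈ exceptionalSet κ S (n + 1) := by
  obtain ⟨j, hj⟩ := mem_iUnion.1 hx
  refine mem_iUnion.2 ⟨j + 1, Or.inr (subset_permClosure _ ?_)⟩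
  simpa only [mem_preimage, Fin.init_snoc] using hj

lemma measure_snoc_mem_exceptionalSet {n : ℕ} {x : Fin n → 𝕏} (hx : x ∉ exceptionalSet κ S n) :
    κ n x {y | Fin.snoc x y ∈ exceptionalSet κ S (n + 1)} = 0 := by
  simp_rw [exceptionalSet, mem_iUnion, ofPred_exists]
  refine measure_iUnion_null fun j => ?_
  by_contra h
  exact hx (mem_iUnion.2 ⟨j + 1, leakSet_subset_exceptionalIter j n h⟩)

section Null

variable {m : (n : ℕ) → Measure (Fin n → 𝕏)} [∀ n, SFinite (m n)] [∀ n, IsMarkovKernel (κ n)]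

lemma measure_leakSet {n : ℕ} (hm : m (n + 1) = (m n ⊗ₘ κ n).map snocProd)
    {E : Set (Fin (n + 1) → 𝕏)} (hE : MeasurableSet E) (h0 : m (n + 1) E = 0) :
    m n (leakSet (κ n) E) = 0 := by
  have hmeas : Measurable fun x => κ n x {y | Fin.snoc x y ∈ E} :=
    (κ n).measurable_kernel_prodMk_left (measurable_snocProd hE)
  rw [hm, map_snocProd_apply _ _ hE, lintegral_eq_zero_iff hmeas] at h0
  exact ae_iff.1 h0

lemma measure_preimage_init {n : ℕ} (hm : m (n + 1) = (m n ⊗ₘ κ n).map snocProd)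
    {E : Set (Fin n → 𝕏)} (hE : MeasurableSet E) : m (n + 1) (Fin.init ⁻¹' E) = m n E := by
  have hpre : snocProd ⁻¹' (Fin.init ⁻¹' E) = E ×ˢ (univ : Set 𝕏) := by
    ext p
    simp [snocProd]
  rw [hm, Measure.map_apply measurable_snocProd (measurable_init hE), hpre,
    Measure.compProd_apply_prod hE .univ]
  simp

lemma measure_exceptionalIter (hm : ∀ n, m (n + 1) = (m n ⊗ₘ κ n).map snocProd)
    (hperm : ∀ n, IsPermInvariant (m n)) (hS : ∀ n, MeasurableSet (S n))
    (hS0 : ∀ n, m n (S n) = 0) : ∀ j n, m n (exceptionalIter κ S j n) = 0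
  | 0, n => (hperm n).measure_permClosure (hS n) (hS0 n)
  | j + 1, n => by
    have ih := measure_exceptionalIter hm hperm hS hS0 j
    have hE := measurableSet_exceptionalIter (κ := κ) hS j
    have hleak : m n (permClosure (leakSet (κ n) (exceptionalIter κ S j (n + 1)))) = 0 :=
      (hperm n).measure_permClosure (measurableSet_leakSet _ (hE _))
        (measure_leakSet (hm n) (hE _) (ih _))
    cases n with
    | zero => exact measure_union_null (ih 0) hleak
    | succ n =>
      have hinit : m (n + 1) (permClosure (Fin.init ⁻¹' exceptionalIter κ S j n)) = 0 :=
        (hperm _).measure_permClosure (measurable_init (hE n))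
          ((measure_preimage_init (hm n) (hE n)).trans (ih n))
      exact measure_union_null (measure_union_null (ih _) hleak) hinit

lemma measure_exceptionalSet (hm : ∀ n, m (n + 1) = (m n ⊗ₘ κ n).map snocProd)
    (hperm : ∀ n, IsPermInvariant (m n)) (hS : ∀ n, MeasurableSet (S n))
    (hS0 : ∀ n, m n (S n) = 0) (n : ℕ) : m n (exceptionalSet κ S n) = 0 :=
  measure_iUnion_null fun j => measure_exceptionalIter hm hperm hS hS0 j n

end Null

end Exceptional

section Symmetrize

variable {γ : Type*} [MeasurableSpace γ] {n : ℕ}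

noncomputable def symmetrize (κ : Kernel (Fin n → 𝕏) (γ × γ)) : Kernel (Fin n → 𝕏) (γ × γ) where
  toFun x := (2 * Fintype.card (Equiv.Perm (Fin n)) : ℝ≥0∞)⁻¹ •
    ∑ σ : Equiv.Perm (Fin n), (κ (x ∘ σ) + (κ (x ∘ σ)).map Prod.swap)
  measurable' := by
    refine Measure.measurable_of_measurable_coe _ fun D hD => ?_
    simp only [Measure.smul_apply, Measure.coe_finsetSum, Finset.sum_apply, Measure.add_apply,
      Measure.map_apply measurable_swap hD, smul_eq_mul]
    refine Measurable.const_mul (Finset.measurable_sum _ fun σ _ => ?_) _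
    exact ((κ.measurable_coe hD).add (κ.measurable_coe (measurable_swap hD))).comp
      (measurable_comp_perm σ)

variable (κ : Kernel (Fin n → 𝕏) (γ × γ))

lemma symmetrize_apply (x : Fin n → 𝕏) {D : Set (γ × γ)} (hD : MeasurableSet D) :
    symmetrize κ x D = (2 * Fintype.card (Equiv.Perm (Fin n)) : ℝ≥0∞)⁻¹ *
      ∑ σ : Equiv.Perm (Fin n), (κ (x ∘ σ) D + κ (x ∘ σ) (Prod.swap ⁻¹' D)) := by
  simp only [symmetrize, Kernel.coe_mk, Measure.smul_apply, Measure.coe_finsetSum,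
    Finset.sum_apply, Measure.add_apply, Measure.map_apply measurable_swap hD, smul_eq_mul]

lemma inv_two_mul_card_mul_sum_add_self (a : ℝ≥0∞) :
    (2 * Fintype.card (Equiv.Perm (Fin n)) : ℝ≥0∞)⁻¹ *
      ∑ _σ : Equiv.Perm (Fin n), (a + a) = a := by
  rw [Finset.sum_const, Finset.card_univ, nsmul_eq_mul, ← two_mul, ← mul_assoc _ 2 a,
    mul_comm _ (2 : ℝ≥0∞), ← mul_assoc, ENNReal.inv_mul_cancel (by positivity)
      (ENNReal.mul_ne_top ENNReal.ofNat_ne_top (ENNReal.natCast_ne_top _)), one_mul]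

instance [IsMarkovKernel κ] : IsMarkovKernel (symmetrize κ) :=
  ⟨fun x => ⟨by
    rw [symmetrize_apply κ x .univ, preimage_univ]
    simp_rw [measure_univ]
    exact inv_two_mul_card_mul_sum_add_self 1⟩⟩

lemma symmetrize_comp_perm (τ : Equiv.Perm (Fin n)) (x : Fin n → 𝕏) :
    symmetrize κ (x ∘ τ) = symmetrize κ x := by
  ext D hD
  rw [symmetrize_apply κ _ hD, symmetrize_apply κ _ hD]
  congr 1
  exact Equiv.sum_comp (Equiv.mulLeft τ)
    fun σ : Equiv.Perm (Fin n) => κ (x ∘ σ) D + κ (x ∘ σ) (Prod.swap ⁻¹' D)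

lemma map_swap_symmetrize (x : Fin n → 𝕏) :
    (symmetrize κ x).map Prod.swap = symmetrize κ x := by
  ext D hD
  rw [Measure.map_apply measurable_swap hD, symmetrize_apply κ _ (measurable_swap hD),
    symmetrize_apply κ _ hD, ← preimage_comp, Prod.swap_swap_eq, preimage_id]
  simp_rw [add_comm]

variable {κ}

lemma setLIntegral_comp_perm {J : Measure ((Fin n → 𝕏) × (γ × γ))} [IsFiniteMeasure J]
    (hperm : ∀ σ : Equiv.Perm (Fin n), J.map (Prod.map (· ∘ σ) id) = J) (hκ : J.fst ⊗ₘ κ = J)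
    [IsSFiniteKernel κ] (σ : Equiv.Perm (Fin n)) {B : Set (Fin n → 𝕏)} {D : Set (γ × γ)}
    (hB : MeasurableSet B) (hD : MeasurableSet D) :
    ∫⁻ x in B, κ (x ∘ σ) D ∂J.fst = J (B ×ˢ D) := by
  have hB' : MeasurableSet ((· ∘ ⇑σ⁻¹) ⁻¹' B) := measurable_comp_perm σ⁻¹ hB
  have hpre : (· ∘ ⇑σ) ⁻¹' ((· ∘ ⇑σ⁻¹) ⁻¹' B) = B := by
    ext x; simp [Function.comp_assoc]
  have hfst : J.fst.map (· ∘ σ) = J.fst := by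
    conv_rhs => rw [← hperm σ]
    rw [Measure.fst, Measure.fst, Measure.map_map (measurable_comp_perm σ) measurable_fst,
      Measure.map_map measurable_fst (by fun_prop)]
    rfl
  calc ∫⁻ x in B, κ (x ∘ σ) D ∂J.fst
      = ∫⁻ y in (· ∘ ⇑σ⁻¹) ⁻¹' B, κ y D ∂(J.fst.map (· ∘ σ)) := by
        rw [setLIntegral_map hB' (κ.measurable_coe hD) (measurable_comp_perm σ), hpre]
    _ = J (((· ∘ ⇑σ⁻¹) ⁻¹' B) ×ˢ D) := by
        rw [hfst, ← Measure.compProd_apply_prod hB' hD, hκ]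
    _ = J (B ×ˢ D) := by
        conv_lhs => rw [← hperm σ]
        rw [Measure.map_apply (by fun_prop) (hB'.prod hD)]
        congr 1
        ext p
        simp [Function.comp_assoc]

lemma compProd_symmetrize {J : Measure ((Fin n → 𝕏) × (γ × γ))} [IsFiniteMeasure J]
    (hperm : ∀ σ : Equiv.Perm (Fin n), J.map (Prod.map (· ∘ σ) id) = J)
    (hswap : J.map (Prod.map id Prod.swap) = J) (hκ : J.fst ⊗ₘ κ = J) [IsMarkovKernel κ] :
    J.fst ⊗ₘ symmetrize κ = J := by
  refine (Measure.ext_prod fun {B D} hB hD => ?_).symm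
  have hswapD : J (B ×ˢ (Prod.swap ⁻¹' D)) = J (B ×ˢ D) := by
    conv_rhs => rw [← hswap]
    rw [Measure.map_apply (by fun_prop) (hB.prod hD)]
    rfl
  have hmeas : ∀ σ : Equiv.Perm (Fin n), ∀ {E : Set (γ × γ)}, MeasurableSet E →
      Measurable fun x => κ (x ∘ σ) E :=
    fun σ _ hE => (κ.measurable_coe hE).comp (measurable_comp_perm σ)
  symm
  calc (J.fst ⊗ₘ symmetrize κ) (B ×ˢ D)
      = ∫⁻ x in B, (2 * Fintype.card (Equiv.Perm (Fin n)) : ℝ≥0∞)⁻¹ *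
          ∑ σ : Equiv.Perm (Fin n), (κ (x ∘ σ) D + κ (x ∘ σ) (Prod.swap ⁻¹' D)) ∂J.fst := by
        rw [Measure.compProd_apply_prod hB hD]
        exact lintegral_congr fun x => symmetrize_apply κ x hD
    _ = (2 * Fintype.card (Equiv.Perm (Fin n)) : ℝ≥0∞)⁻¹ *
          ∑ σ : Equiv.Perm (Fin n), (∫⁻ x in B, κ (x ∘ σ) D ∂J.fst
            + ∫⁻ x in B, κ (x ∘ σ) (Prod.swap ⁻¹' D) ∂J.fst) := by
        have hterm : ∀ σ : Equiv.Perm (Fin n),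
            Measurable fun x => κ (x ∘ σ) D + κ (x ∘ σ) (Prod.swap ⁻¹' D) :=
          fun σ => (hmeas σ hD).add (hmeas σ (measurable_swap hD))
        rw [lintegral_const_mul _ (Finset.measurable_sum _ fun σ _ => hterm σ),
          lintegral_finsetSum _ fun σ _ => hterm σ]
        simp_rw [lintegral_add_left (hmeas _ hD)]
    _ = J (B ×ˢ D) := by
        simp_rw [setLIntegral_comp_perm hperm hκ _ hB hD,
          setLIntegral_comp_perm hperm hκ _ hB (measurable_swap hD), hswapD]
        exact inv_two_mul_card_mul_sum_add_self _

end Symmetrize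

section Sequence

variable (L : Measure (ℕ → 𝕏))

noncomputable def marginal (n : ℕ) : Measure (Fin n → 𝕏) := L.map (initSeg n)

noncomputable def nextLaw (n : ℕ) : Measure ((Fin n → 𝕏) × 𝕏) :=
  L.map fun f => (initSeg n f, f n)

noncomputable def nextTwoLaw (n : ℕ) : Measure ((Fin n → 𝕏) × (𝕏 × 𝕏)) :=
  L.map fun f => (initSeg n f, f n, f (n + 1))

variable [IsFiniteMeasure L] in
instance (n : ℕ) : IsFiniteMeasure (marginal L n) := by unfold marginal; infer_instance

variable [IsFiniteMeasure L] in
instance (n : ℕ) : IsFiniteMeasure (nextLaw L n) := by unfold nextLaw; infer_instance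

variable [IsFiniteMeasure L] in
instance (n : ℕ) : IsFiniteMeasure (nextTwoLaw L n) := by unfold nextTwoLaw; infer_instance

lemma map_snocProd_nextLaw (n : ℕ) : (nextLaw L n).map snocProd = marginal L (n + 1) := by
  rw [nextLaw, Measure.map_map measurable_snocProd (by fun_prop)]
  exact congrArg L.map (funext (snocProd_initSeg n))

lemma marginal_succ_eq_map {n : ℕ} {κ : Kernel (Fin n → 𝕏) 𝕏}
    (h : nextLaw L n = marginal L n ⊗ₘ κ) :
    marginal L (n + 1) = (marginal L n ⊗ₘ κ).map snocProd := by
  rw [← h, map_snocProd_nextLaw]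

lemma fst_nextTwoLaw (n : ℕ) : (nextTwoLaw L n).fst = marginal L n :=
  Measure.fst_map_prodMk (by fun_prop)

lemma map_nextTwoLaw_fst (n : ℕ) : (nextTwoLaw L n).map (Prod.map id Prod.fst) = nextLaw L n := by
  rw [nextTwoLaw, Measure.map_map (by fun_prop) (by fun_prop)]
  rfl

lemma map_nextTwoLaw_snoc (n : ℕ) :
    (nextTwoLaw L n).map (fun q => (snocProd (q.1, q.2.1), q.2.2)) = nextLaw L (n + 1) := by
  rw [nextTwoLaw, Measure.map_map (by fun_prop) (by fun_prop)]
  exact congrArg L.map (funext fun f => Prod.ext (snocProd_initSeg n f) rfl)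

end Sequence

lemma exchangeable_iff_map {Ω : Type*} [MeasurableSpace Ω] {μ : Measure Ω} {X : ℕ → Ω → 𝕏}
    (hX : Measurable fun ω n => X n ω) :
    Exchangeable μ X ↔ Exchangeable (μ.map fun ω n => X n ω) fun n f => f n := by
  refine forall₂_congr fun σ _ => ?_
  rw [Measure.map_map (by fun_prop) hX, Measure.map_map (by fun_prop) hX]
  rfl

lemma isPredictiveRule_iff {Ω : Type*} [MeasurableSpace Ω] {μ : Measure Ω} {X : ℕ → Ω → 𝕏}
    (hX : Measurable fun ω n => X n ω) {P : (n : ℕ) → Kernel (Fin n → 𝕏) 𝕏}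
    [∀ n, IsSFiniteKernel (P n)] [IsFiniteMeasure μ] :
    IsPredictiveRule μ X P ↔ ∀ n, nextLaw (μ.map fun ω n => X n ω) n
      = marginal (μ.map fun ω n => X n ω) n ⊗ₘ P n := by
  have hnext : ∀ n {A B}, MeasurableSet A → MeasurableSet B →
      μ {ω | (fun i : Fin n => X i ω) ∈ B ∧ X n ω ∈ A}
        = nextLaw (μ.map fun ω n => X n ω) n (B ×ˢ A) := fun n A B hA hB => by
    have hpair : Measurable fun f : ℕ → 𝕏 => (initSeg n f, f n) := by fun_prop
    rw [nextLaw, Measure.map_map hpair hX, Measure.map_apply (hpair.comp hX) (hB.prod hA)]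
    rfl
  have hmarg : ∀ n, μ.map (fun ω (i : Fin n) => X i ω) = marginal (μ.map fun ω n => X n ω) n :=
    fun n => by rw [marginal, Measure.map_map (measurable_initSeg n) hX]; rfl
  refine forall_congr' fun n => ⟨fun h => Measure.ext_prod fun {B A} hB hA => ?_,
    fun h A B hA hB => ?_⟩
  · rw [← hnext n hA hB, h A B hA hB, Measure.compProd_apply_prod hB hA, hmarg]
  · rw [hnext n hA hB, h, Measure.compProd_apply_prod hB hA, hmarg]

section Exchangeable

variable {L : Measure (ℕ → 𝕏)}

lemma _root_.Exchangeable.map_comp_perm (hL : Exchangeable L fun n f => f n) {σ : Equiv.Perm ℕ}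
    (hσ : {n | σ n ≠ n}.Finite) {β : Type*} [MeasurableSpace β] {F : (ℕ → 𝕏) → β}
    (hF : Measurable F) : L.map (fun f => F (f ∘ σ)) = L.map F := by
  rw [show (fun f => F (f ∘ σ)) = F ∘ fun f n => f (σ n) from rfl,
    ← Measure.map_map hF (by fun_prop), hL σ hσ, Measure.map_map hF (by fun_prop)]
  rfl

lemma finite_setOf_extendDomain_ne {n : ℕ} (σ : Equiv.Perm (Fin n)) :
    {k | σ.extendDomain Fin.equivSubtype k ≠ k}.Finite :=
  (finite_Iio n).subset fun k hk => by
    by_contra h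
    exact hk (Equiv.Perm.extendDomain_apply_not_subtype _ _ h)

lemma _root_.Exchangeable.isPermInvariant_marginal (hL : Exchangeable L fun n f => f n) (n : ℕ) :
    IsPermInvariant (marginal L n) := by
  intro σ
  rw [marginal, Measure.map_map (measurable_comp_perm σ) (measurable_initSeg n),
    ← hL.map_comp_perm (finite_setOf_extendDomain_ne σ) (measurable_initSeg n)]
  exact congrArg L.map (funext fun f => (initSeg_comp_extendDomain σ f).symm)

lemma _root_.Exchangeable.map_prodMap_comp_perm_nextTwoLaw (hL : Exchangeable L fun n f => f n)
    {n : ℕ} (σ : Equiv.Perm (Fin n)) :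
    (nextTwoLaw L n).map (Prod.map (· ∘ σ) id) = nextTwoLaw L n := by
  have hfix : ∀ k, n ≤ k → σ.extendDomain Fin.equivSubtype k = k := fun k hk =>
    Equiv.Perm.extendDomain_apply_not_subtype _ _ (not_lt.2 hk)
  rw [nextTwoLaw, Measure.map_map (by fun_prop) (by fun_prop),
    ← hL.map_comp_perm (finite_setOf_extendDomain_ne σ)
      (F := fun f => (initSeg n f, f n, f (n + 1))) (by fun_prop)]
  refine congrArg L.map (funext fun f => ?_)
  simp only [Function.comp_apply, Prod.map, id, initSeg_comp_extendDomain,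
    hfix n le_rfl, hfix (n + 1) (Nat.le_succ n)]

lemma _root_.Exchangeable.map_prodMap_swap_nextTwoLaw (hL : Exchangeable L fun n f => f n) (n : ℕ) :
    (nextTwoLaw L n).map (Prod.map id Prod.swap) = nextTwoLaw L n := by
  have hfin : {k | Equiv.swap n (n + 1) k ≠ k}.Finite :=
    (toFinite {n, n + 1}).subset fun k hk => by
      by_contra h
      simp only [mem_insert_iff, mem_singleton_iff, not_or] at h
      exact hk (Equiv.swap_apply_of_ne_of_ne h.1 h.2)
  rw [nextTwoLaw, Measure.map_map (by fun_prop) (by fun_prop),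
    ← hL.map_comp_perm hfin (F := fun f => (initSeg n f, f n, f (n + 1))) (by fun_prop)]
  refine congrArg L.map (funext fun f => ?_)
  have hinit : initSeg n (f ∘ Equiv.swap n (n + 1)) = initSeg n f := funext fun i =>
    congrArg f (Equiv.swap_apply_of_ne_of_ne i.is_lt.ne (by omega))
  simp only [Function.comp_apply, Prod.map, id, Prod.swap, hinit, Equiv.swap_apply_left,
    Equiv.swap_apply_right]

lemma ext_of_map_initSeg {L₁ L₂ : Measure (ℕ → 𝕏)} [IsFiniteMeasure L₁] {N₀ : ℕ}
    (h : ∀ N, N₀ ≤ N → L₁.map (initSeg N) = L₂.map (initSeg N)) : L₁ = L₂ := by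
  have hproj : ∀ L : Measure (ℕ → 𝕏), (∀ N, N₀ ≤ N → L.map (initSeg N) = L₁.map (initSeg N)) →
      IsProjectiveLimit L fun I : Finset ℕ => L₁.map I.restrict := by
    intro L hL I
    have hI : ∀ i ∈ I, i < max N₀ (I.sup id + 1) := fun i hi =>
      lt_max_of_lt_right (Nat.lt_succ_of_le (Finset.le_sup (f := id) hi))
    have hfac : (I.restrict : (ℕ → 𝕏) → _) =
        (fun x (i : I) => x ⟨i, hI i i.2⟩) ∘ initSeg (max N₀ (I.sup id + 1)) := rfl
    have hg : Measurable fun (x : Fin (max N₀ (I.sup id + 1)) → 𝕏) (i : I) => x ⟨i, hI i i.2⟩ :=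
      measurable_pi_lambda _ fun _ => measurable_pi_apply _
    dsimp only
    rw [hfac, ← Measure.map_map hg (measurable_initSeg _),
      ← Measure.map_map hg (measurable_initSeg _), hL _ (le_max_left _ _)]
  exact (hproj L₁ fun _ _ => rfl).unique (hproj L₂ fun N hN => (h N hN).symm)

lemma exchangeable_of_isPermInvariant_marginal [IsFiniteMeasure L]
    (h : ∀ n, IsPermInvariant (marginal L n)) : Exchangeable L fun n f => f n := by
  intro σ hσ
  obtain ⟨M, hM⟩ := hσ.bddAbove
  have hstable : ∀ N, M < N → ∀ k, σ k < N ↔ k < N := fun N hN k => by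
    by_cases hk : σ k = k
    · rw [hk]
    · have h1 : k ≤ M := hM hk
      have h2 : σ k ≤ M := hM fun h => hk (σ.injective h)
      omega
  refine ext_of_map_initSeg (N₀ := M + 1) fun N hN => ?_
  set τ : Equiv.Perm (Fin N) := Fin.equivSubtype.symm.permCongr (σ.subtypePerm (hstable N hN))
  rw [Measure.map_map (measurable_initSeg N) (by fun_prop),
    Measure.map_map (measurable_initSeg N) (by fun_prop)]
  have hτ : initSeg N ∘ (fun f n => f (σ n)) = (· ∘ τ) ∘ initSeg (𝕏 := 𝕏) N := rfl
  rw [hτ, ← Measure.map_map (measurable_comp_perm τ) (measurable_initSeg N)]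
  exact h N τ

end Exchangeable

section Construction

variable [StandardBorelSpace 𝕏] [Nonempty 𝕏] (L : Measure (ℕ → 𝕏)) [IsFiniteMeasure L]

noncomputable def nextTwoKernel (n : ℕ) : Kernel (Fin n → 𝕏) (𝕏 × 𝕏) :=
  symmetrize (nextTwoLaw L n).condKernel

instance (n : ℕ) : IsMarkovKernel (nextTwoKernel L n) := by unfold nextTwoKernel; infer_instance

noncomputable def nextKernel (n : ℕ) : Kernel (Fin n → 𝕏) 𝕏 := (nextTwoKernel L n).fst

noncomputable def secondKernel (n : ℕ) : Kernel ((Fin n → 𝕏) × 𝕏) 𝕏 :=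
  (nextTwoKernel L n).condKernel

instance (n : ℕ) : IsMarkovKernel (nextKernel L n) := by unfold nextKernel; infer_instance

instance (n : ℕ) : IsMarkovKernel (secondKernel L n) := by unfold secondKernel; infer_instance

lemma nextKernel_comp_perm {n : ℕ} (σ : Equiv.Perm (Fin n)) (x : Fin n → 𝕏) :
    nextKernel L n (x ∘ σ) = nextKernel L n x := by
  rw [nextKernel, Kernel.fst_apply, Kernel.fst_apply, nextTwoKernel, symmetrize_comp_perm]

lemma setLIntegral_secondKernel {n : ℕ} (x : Fin n → 𝕏) {A B : Set 𝕏} (hA : MeasurableSet A)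
    (hB : MeasurableSet B) :
    ∫⁻ y in A, secondKernel L n (x, y) B ∂(nextKernel L n x) = nextTwoKernel L n x (A ×ˢ B) := by
  rw [nextKernel, secondKernel, ← Kernel.compProd_apply_prod hA hB,
    (nextTwoKernel L n).disintegrate (nextTwoKernel L n).condKernel]

def mismatchSet : (n : ℕ) → Set (Fin n → 𝕏)
  | 0 => ∅
  | n + 1 => {z | nextKernel L (n + 1) z ≠ secondKernel L n (initLast z)}

lemma measurableSet_mismatchSet : ∀ n, MeasurableSet (mismatchSet L n)
  | 0 => .empty
  | n + 1 => (Kernel.measurableSet_setOf_eq (nextKernel L (n + 1))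
      ((secondKernel L n).comap initLast measurable_initLast)).compl

noncomputable def badSet (n : ℕ) : Set (Fin n → 𝕏) :=
  exceptionalSet (nextKernel L) (mismatchSet L) n

lemma measurableSet_badSet (n : ℕ) : MeasurableSet (badSet L n) :=
  measurableSet_exceptionalSet (measurableSet_mismatchSet L) n

open Classical in
noncomputable def predictiveKernel (n : ℕ) : Kernel (Fin n → 𝕏) 𝕏 :=
  Kernel.piecewise (measurableSet_badSet L n)
    (Kernel.const _ (Measure.dirac (Classical.arbitrary 𝕏))) (nextKernel L n)

instance (n : ℕ) : IsMarkovKernel (predictiveKernel L n) := by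
  unfold predictiveKernel; infer_instance

lemma predictiveKernel_of_mem {n : ℕ} {x : Fin n → 𝕏} (hx : x ∈ badSet L n) :
    predictiveKernel L n x = Measure.dirac (Classical.arbitrary 𝕏) := by
  classical
  rw [predictiveKernel, Kernel.piecewise_apply, if_pos hx, Kernel.const_apply]

lemma predictiveKernel_of_notMem {n : ℕ} {x : Fin n → 𝕏} (hx : x ∉ badSet L n) :
    predictiveKernel L n x = nextKernel L n x := by
  classical
  rw [predictiveKernel, Kernel.piecewise_apply, if_neg hx]

lemma predictiveKernel_comp_perm {n : ℕ} (σ : Equiv.Perm (Fin n)) (x : Fin n → 𝕏) :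
    predictiveKernel L n (x ∘ σ) = predictiveKernel L n x := by
  by_cases hx : x ∈ badSet L n
  · have hxσ : x ∘ σ ∈ badSet L n := by
      rw [← mem_preimage (f := (· ∘ σ)), badSet, preimage_comp_perm_exceptionalSet]
      exact hx
    rw [predictiveKernel_of_mem L hx, predictiveKernel_of_mem L hxσ]
  · have hxσ : x ∘ σ ∉ badSet L n := by
      rw [← mem_preimage (f := (· ∘ σ)), badSet, preimage_comp_perm_exceptionalSet]
      exact hx
    rw [predictiveKernel_of_notMem L hx, predictiveKernel_of_notMem L hxσ, nextKernel_comp_perm]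

lemma twoStep_predictiveKernel_of_mem {n : ℕ} {x : Fin n → 𝕏} (hx : x ∈ badSet L n) :
    twoStep (predictiveKernel L) n x
      = (Measure.dirac (Classical.arbitrary 𝕏)).prod (Measure.dirac (Classical.arbitrary 𝕏)) := by
  rw [← Measure.compProd_const, twoStep, predictiveKernel_of_mem L hx]
  congr 1
  ext1 y
  rw [Kernel.comap_apply, Kernel.const_apply,
    predictiveKernel_of_mem L (snoc_mem_exceptionalSet hx y)]

lemma twoStep_predictiveKernel_of_notMem {n : ℕ} {x : Fin n → 𝕏} (hx : x ∉ badSet L n) :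
    twoStep (predictiveKernel L) n x = nextTwoKernel L n x := by
  refine Measure.ext_prod fun {A B} hA hB => ?_
  have hgood : ∀ᵐ y ∂nextKernel L n x, Fin.snoc x y ∉ badSet L (n + 1) :=
    measure_mono_null (fun _ hy => not_not.1 hy) (measure_snoc_mem_exceptionalSet hx)
  rw [twoStep_apply_prod x hA hB, predictiveKernel_of_notMem L hx,
    ← setLIntegral_secondKernel L x hA hB]
  refine setLIntegral_congr_fun_ae hA (hgood.mono fun y hy _ => ?_)
  suffices predictiveKernel L (n + 1) (Fin.snoc x y) = secondKernel L n (x, y) by rw [this]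
  rw [predictiveKernel_of_notMem L hy]
  by_contra hne
  exact hy (subset_exceptionalSet (n + 1) (by simpa [mismatchSet, initLast] using hne))

lemma map_swap_twoStep_predictiveKernel {n : ℕ} (x : Fin n → 𝕏) :
    (twoStep (predictiveKernel L) n x).map Prod.swap = twoStep (predictiveKernel L) n x := by
  by_cases hx : x ∈ badSet L n
  · rw [twoStep_predictiveKernel_of_mem L hx, Measure.prod_swap]
  · rw [twoStep_predictiveKernel_of_notMem L hx, nextTwoKernel, map_swap_symmetrize]

variable {L}

lemma _root_.Exchangeable.compProd_nextTwoKernel (hL : Exchangeable L fun n f => f n) (n : ℕ) :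
    marginal L n ⊗ₘ nextTwoKernel L n = nextTwoLaw L n := by
  rw [← fst_nextTwoLaw]
  exact compProd_symmetrize hL.map_prodMap_comp_perm_nextTwoLaw
    (hL.map_prodMap_swap_nextTwoLaw n) (Measure.disintegrate _ _)

lemma _root_.Exchangeable.nextLaw_eq_compProd (hL : Exchangeable L fun n f => f n) (n : ℕ) :
    nextLaw L n = marginal L n ⊗ₘ nextKernel L n := by
  rw [← map_nextTwoLaw_fst, ← hL.compProd_nextTwoKernel, nextKernel, Kernel.fst_eq,
    Measure.compProd_map measurable_fst]

lemma _root_.Exchangeable.ae_nextKernel_succ_eq (hL : Exchangeable L fun n f => f n) (n : ℕ) :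
    ∀ᵐ z ∂marginal L (n + 1), nextKernel L (n + 1) z = secondKernel L n (initLast z) := by
  have hsecond : nextLaw L (n + 1) = marginal L (n + 1) ⊗ₘ (secondKernel L n).comap initLast
      measurable_initLast := by
    calc nextLaw L (n + 1)
        = (nextTwoLaw L n).map fun q => (snocProd (q.1, q.2.1), q.2.2) :=
          (map_nextTwoLaw_snoc L n).symm
      _ = (marginal L n ⊗ₘ (nextKernel L n ⊗ₖ secondKernel L n)).map
            fun q => (snocProd (q.1, q.2.1), q.2.2) := by
          rw [nextKernel, secondKernel, Kernel.disintegrate, hL.compProd_nextTwoKernel]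
      _ = (marginal L n ⊗ₘ nextKernel L n ⊗ₘ secondKernel L n).map (Prod.map snocProd id) := by
          rw [← Measure.compProd_assoc, Measure.map_map (by fun_prop) (by fun_prop)]
          rfl
      _ = marginal L (n + 1) ⊗ₘ (secondKernel L n).comap initLast measurable_initLast := by
          rw [← hL.nextLaw_eq_compProd n, ← Measure.map_compProd_comap _ _ measurable_snocProd
            measurable_initLast initLast_snocProd, map_snocProd_nextLaw]
  filter_upwards [Kernel.ae_eq_of_compProd_eq ((hL.nextLaw_eq_compProd (n + 1)).symm.trans hsecond)]
    with z hz
  rw [hz, Kernel.comap_apply]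

lemma _root_.Exchangeable.measure_mismatchSet (hL : Exchangeable L fun n f => f n) :
    ∀ n, marginal L n (mismatchSet L n) = 0
  | 0 => measure_empty
  | n + 1 => ae_iff.1 (hL.ae_nextKernel_succ_eq n)

lemma _root_.Exchangeable.measure_badSet (hL : Exchangeable L fun n f => f n) (n : ℕ) :
    marginal L n (badSet L n) = 0 :=
  measure_exceptionalSet (fun n => marginal_succ_eq_map L (hL.nextLaw_eq_compProd n))
    hL.isPermInvariant_marginal (measurableSet_mismatchSet L) hL.measure_mismatchSet n

lemma _root_.Exchangeable.nextLaw_eq_compProd_predictiveKernel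
    (hL : Exchangeable L fun n f => f n) (n : ℕ) :
    nextLaw L n = marginal L n ⊗ₘ predictiveKernel L n := by
  rw [hL.nextLaw_eq_compProd]
  refine Measure.compProd_congr (measure_mono_null (fun x hx => ?_) (hL.measure_badSet n))
  by_contra hbad
  exact hx (predictiveKernel_of_notMem L hbad).symm

end Construction

end Predictive

open Predictive

/-- **Predictive characterization of exchangeability** (Fortini, Ladelli, Regazzini).
A sequence `(X_n)` is exchangeable if and only if it admits a predictive rule `(P_n)` such that
(i) each `P_n(A | x_{1:n})` is a symmetric function of `(x_1,…,x_n)`, and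
(ii) the set function `(A,B) ↦ ∫_A P_{n+1}(B | x_{1:n}, x_{n+1}) dP_n(x_{n+1} | x_{1:n})`
is symmetric in `A` and `B`. -/
theorem statement1
    {Ω 𝕏 : Type*} [MeasurableSpace Ω] [MeasurableSpace 𝕏] [TopologicalSpace 𝕏]
    [PolishSpace 𝕏] [BorelSpace 𝕏]
    (μ : Measure Ω) [IsProbabilityMeasure μ]
    (X : ℕ → Ω → 𝕏) (hX : ∀ n, Measurable (X n)) :
    Exchangeable μ X ↔
      ∃ P : (n : ℕ) → Kernel (Fin n → 𝕏) 𝕏,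
        (∀ n, IsMarkovKernel (P n)) ∧ IsPredictiveRule μ X P ∧
        -- (i) symmetry of the predictive distributions in the past observations
        (∀ (n : ℕ) (σ : Equiv.Perm (Fin n)) (x : Fin n → 𝕏) (A : Set 𝕏), MeasurableSet A →
          P n (fun i => x (σ i)) A = P n x A) ∧
        -- (ii) symmetry in the next two observations
        (∀ (n : ℕ) (x : Fin n → 𝕏) (A B : Set 𝕏), MeasurableSet A → MeasurableSet B →
          ∫⁻ y in A, P (n + 1) (Fin.snoc x y) B ∂(P n x)
            = ∫⁻ y in B, P (n + 1) (Fin.snoc x y) A ∂(P n x)) := by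
  have hXm : Measurable fun ω n => X n ω := measurable_pi_lambda _ hX
  have : Nonempty 𝕏 := ⟨X 0 (nonempty_of_isProbabilityMeasure μ).some⟩
  rw [exchangeable_iff_map hXm]
  constructor
  · intro hL
    exact ⟨predictiveKernel _, fun n => inferInstance,
      (isPredictiveRule_iff hXm).2 hL.nextLaw_eq_compProd_predictiveKernel,
      fun n σ x A _ => congrArg (· A) (predictiveKernel_comp_perm _ σ x),
      fun n x => (map_swap_twoStep_eq_iff x).1 (map_swap_twoStep_predictiveKernel _ x)⟩
  · rintro ⟨P, hP, hpred, hi, hii⟩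
    exact exchangeable_of_isPermInvariant_marginal <| isPermInvariant_of_symmetric
      (fun n => marginal_succ_eq_map _ ((isPredictiveRule_iff hXm).1 hpred n))
      (fun n σ x => Measure.ext fun A hA => hi n σ x A hA)
      (fun n x => (map_swap_twoStep_eq_iff x).2 (hii n x))
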